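/- Let 0 < α ≤ 1 and let μ be a Borel probability measure on ℝ. Then sup over z ∈ ℂ with Im z ≠ 0 of |Im z|^{1−α} · |Im F_μ(z)| is finite if and only if d_μ^{α,∞} is finite. -/

import Mathlib

/-!
The imaginary part of the Borel transform is a Poisson integral:
`|Im F_μ(a + iy)| = ∫ |y| / ((x - a)² + y²) dμ(x)`.

If `|y|^{1-α} |Im F_μ(a + iy)| ≤ C`, take `y = ε`: the kernel is at least `1/(2ε)` on
`(a - ε, a + ε)`, so `μ(a - ε, a + ε) ≤ 2ε |Im F_μ(a + iε)| ≤ 2^{1-α} C (2ε)^α`.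

Conversely, by the layer cake formula the Poisson integral is `∫₀^∞ μ{kernel > t} dt`. The
superlevel set `{kernel > t}` lies in the interval of radius `√(|y|/t)` around `a`, and is empty
for `t ≥ 1/|y|`, so its mass is at most `d (2√(|y|/t))^α` with `d = d_μ^{α,∞}`. Integrating
`t^{-α/2}` over `(0, 1/|y|]` gives `|Im F_μ(a + iy)| ≤ 2^α d |y|^{α-1} / (1 - α/2)`.
-/

open MeasureTheory Complex Set

/-- The Borel transform of a measure `σ` on `ℝ`: `F_σ(z) = ∫ 1/(x - z) dσ(x)`. -/
noncomputable def borelTransform (σ : Measure ℝ) (z : ℂ) : ℂ :=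
  ∫ x : ℝ, ((x : ℂ) - z)⁻¹ ∂σ

/-- `d_μ^{α,∞} = sup_{x ∈ ℝ} sup_{ε > 0} μ((x−ε, x+ε))/(2ε)^α`. -/
noncomputable def dAlpha (μ : Measure ℝ) (α : ℝ) : ENNReal :=
  ⨆ (x : ℝ) (ε : ℝ) (_ : 0 < ε),
    μ (Set.Ioo (x - ε) (x + ε)) / ENNReal.ofReal ((2 * ε) ^ α)

/-- `π` times the Poisson kernel of the half-plane containing `z`, at the boundary point `x`. -/
noncomputable def halfPlanePoissonKernel (z : ℂ) (x : ℝ) : ℝ :=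
  |z.im| / ((x - z.re) ^ 2 + z.im ^ 2)

section PoissonKernel

variable {z : ℂ}

lemma halfPlanePoissonKernel_nonneg (z : ℂ) (x : ℝ) : 0 ≤ halfPlanePoissonKernel z x := by
  unfold halfPlanePoissonKernel; positivity

lemma measurable_halfPlanePoissonKernel (z : ℂ) : Measurable (halfPlanePoissonKernel z) := by
  unfold halfPlanePoissonKernel; fun_prop

lemma halfPlanePoissonKernel_le_inv (hz : z.im ≠ 0) (x : ℝ) :
    halfPlanePoissonKernel z x ≤ |z.im|⁻¹ := by
  have hY : 0 < |z.im| := abs_pos.mpr hz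
  rw [halfPlanePoissonKernel, div_le_iff₀ (by positivity), ← sq_abs z.im]
  field_simp
  nlinarith [sq_nonneg (x - z.re)]

lemma im_inv_ofReal_sub (x : ℝ) (z : ℂ) :
    ((x : ℂ) - z)⁻¹.im = z.im / ((x - z.re) ^ 2 + z.im ^ 2) := by
  rw [inv_im, normSq_apply]
  simp only [sub_re, sub_im, ofReal_re, ofReal_im]
  ring

lemma integrable_inv_ofReal_sub (μ : Measure ℝ) [IsFiniteMeasure μ] (hz : z.im ≠ 0) :
    Integrable (fun x : ℝ => ((x : ℂ) - z)⁻¹) μ := by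
  refine Integrable.of_bound (by fun_prop) |z.im|⁻¹ (Filter.Eventually.of_forall fun x => ?_)
  rw [norm_inv]
  refine inv_anti₀ (abs_pos.mpr hz) ?_
  simpa using abs_im_le_norm ((x : ℂ) - z)

lemma abs_im_borelTransform (μ : Measure ℝ) [IsFiniteMeasure μ] (hz : z.im ≠ 0) :
    |(borelTransform μ z).im| = ∫ x, halfPlanePoissonKernel z x ∂μ := by
  have h := integral_im (𝕜 := ℂ) (integrable_inv_ofReal_sub μ hz)
  simp only [RCLike.im_to_complex, im_inv_ofReal_sub, div_eq_mul_inv] at h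
  rw [borelTransform, ← h, integral_const_mul, abs_mul,
    abs_of_nonneg (integral_nonneg fun x => by positivity), ← integral_const_mul]
  simp only [halfPlanePoissonKernel, div_eq_mul_inv]

lemma ofReal_abs_im_borelTransform (μ : Measure ℝ) [IsFiniteMeasure μ] (hz : z.im ≠ 0) :
    ENNReal.ofReal |(borelTransform μ z).im| =
      ∫⁻ x, ENNReal.ofReal (halfPlanePoissonKernel z x) ∂μ := by
  rw [abs_im_borelTransform μ hz]
  refine ofReal_integral_eq_lintegral_ofReal ?_
    (Filter.Eventually.of_forall (halfPlanePoissonKernel_nonneg z))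
  refine Integrable.of_bound (measurable_halfPlanePoissonKernel z).aestronglyMeasurable |z.im|⁻¹
    (Filter.Eventually.of_forall fun x => ?_)
  rw [Real.norm_of_nonneg (halfPlanePoissonKernel_nonneg z x)]
  exact halfPlanePoissonKernel_le_inv hz x

end PoissonKernel

section HolderConstant

variable {μ : Measure ℝ} {α : ℝ}

lemma dAlpha_le_iff {d : ENNReal} :
    dAlpha μ α ≤ d ↔
      ∀ x ε : ℝ, 0 < ε → μ (Ioo (x - ε) (x + ε)) ≤ d * ENNReal.ofReal ((2 * ε) ^ α) := by
  simp only [dAlpha, iSup_le_iff]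
  refine forall_congr' fun x => forall_congr' fun ε => ?_
  refine forall_congr' fun hε => ENNReal.div_le_iff ?_ ENNReal.ofReal_ne_top
  exact ENNReal.ofReal_ne_zero_iff.mpr (by positivity)

lemma measure_Ioo_le_dAlpha_mul (x : ℝ) {ε : ℝ} (hε : 0 < ε) :
    μ (Ioo (x - ε) (x + ε)) ≤ dAlpha μ α * ENNReal.ofReal ((2 * ε) ^ α) :=
  dAlpha_le_iff.mp le_rfl x ε hε

lemma measure_Ioo_le_ofReal_mul_abs_im_borelTransform [IsFiniteMeasure μ] (a : ℝ) {ε : ℝ}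
    (hε : 0 < ε) :
    μ (Ioo (a - ε) (a + ε)) ≤ ENNReal.ofReal (2 * ε * |(borelTransform μ ⟨a, ε⟩).im|) := by
  set z : ℂ := ⟨a, ε⟩
  have h2ε : 0 < 2 * ε := by positivity
  have kernel_ge : ∀ x ∈ Ioo (a - ε) (a + ε),
      ENNReal.ofReal (2 * ε)⁻¹ ≤ ENNReal.ofReal (halfPlanePoissonKernel z x) := by
    rintro x ⟨hx₁, hx₂⟩
    refine ENNReal.ofReal_le_ofReal ?_
    show (2 * ε)⁻¹ ≤ |ε| / ((x - a) ^ 2 + ε ^ 2)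
    rw [abs_of_pos hε, le_div_iff₀ (by positivity)]
    field_simp
    nlinarith
  calc μ (Ioo (a - ε) (a + ε))
      = ENNReal.ofReal (2 * ε) * ∫⁻ _ in Ioo (a - ε) (a + ε), ENNReal.ofReal (2 * ε)⁻¹ ∂μ := by
        rw [setLIntegral_const, ← mul_assoc, ← ENNReal.ofReal_mul h2ε.le,
          mul_inv_cancel₀ h2ε.ne', ENNReal.ofReal_one, one_mul]
    _ ≤ ENNReal.ofReal (2 * ε) *
          ∫⁻ x in Ioo (a - ε) (a + ε), ENNReal.ofReal (halfPlanePoissonKernel z x) ∂μ := by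
        gcongr ENNReal.ofReal (2 * ε) * ?_
        exact setLIntegral_mono ((measurable_halfPlanePoissonKernel z).ennreal_ofReal) kernel_ge
    _ ≤ ENNReal.ofReal (2 * ε) * ∫⁻ x, ENNReal.ofReal (halfPlanePoissonKernel z x) ∂μ := by
        gcongr ENNReal.ofReal (2 * ε) * ?_
        exact setLIntegral_le_lintegral _ _
    _ = ENNReal.ofReal (2 * ε * |(borelTransform μ z).im|) := by
        rw [← ofReal_abs_im_borelTransform μ hε.ne', ENNReal.ofReal_mul h2ε.le]

lemma dAlpha_le_of_abs_im_borelTransform_le [IsFiniteMeasure μ] {C : ℝ}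
    (hC : ∀ z : ℂ, z.im ≠ 0 → |z.im| ^ (1 - α) * |(borelTransform μ z).im| ≤ C) :
    dAlpha μ α ≤ ENNReal.ofReal (2 ^ (1 - α) * C) := by
  refine dAlpha_le_iff.mpr fun a ε hε => ?_
  have h2ε : 0 < 2 * ε := by positivity
  have hCε : ε ^ (1 - α) * |(borelTransform μ ⟨a, ε⟩).im| ≤ C := by
    simpa [abs_of_pos hε] using hC ⟨a, ε⟩ hε.ne'
  calc μ (Ioo (a - ε) (a + ε))
      ≤ ENNReal.ofReal (2 * ε * |(borelTransform μ ⟨a, ε⟩).im|) :=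
        measure_Ioo_le_ofReal_mul_abs_im_borelTransform a hε
    _ = ENNReal.ofReal
          (2 ^ (1 - α) * (ε ^ (1 - α) * |(borelTransform μ ⟨a, ε⟩).im|) * (2 * ε) ^ α) := by
        have h : 2 ^ (1 - α) * ε ^ (1 - α) * (2 * ε) ^ α = 2 * ε := by
          rw [← Real.mul_rpow zero_le_two hε.le, ← Real.rpow_add h2ε, sub_add_cancel,
            Real.rpow_one]
        congr 1
        linear_combination (-|(borelTransform μ ⟨a, ε⟩).im|) * h
    _ ≤ ENNReal.ofReal (2 ^ (1 - α) * C * (2 * ε) ^ α) := by gcongr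
    _ = ENNReal.ofReal (2 ^ (1 - α) * C) * ENNReal.ofReal ((2 * ε) ^ α) :=
        ENNReal.ofReal_mul' (by positivity)

end HolderConstant

section LayerCake

variable {μ : Measure ℝ} {α : ℝ} {z : ℂ}

lemma setOf_lt_halfPlanePoissonKernel_subset (hz : z.im ≠ 0) {t : ℝ} (ht : 0 < t) :
    {x | t < halfPlanePoissonKernel z x} ⊆
      Ioo (z.re - √(|z.im| / t)) (z.re + √(|z.im| / t)) := by
  intro x hx
  have hD : 0 < (x - z.re) ^ 2 + z.im ^ 2 := by positivity
  have hx : t * ((x - z.re) ^ 2 + z.im ^ 2) < |z.im| := (lt_div_iff₀ hD).mp hx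
  have hsq : |x - z.re| ^ 2 < |z.im| / t := by
    rw [sq_abs, lt_div_iff₀ ht]
    nlinarith [sq_nonneg z.im]
  have habs := (Real.lt_sqrt (abs_nonneg _)).mpr hsq
  rw [abs_sub_lt_iff] at habs
  constructor <;> linarith

lemma setOf_lt_halfPlanePoissonKernel_eq_empty (hz : z.im ≠ 0) {t : ℝ} (ht : |z.im|⁻¹ ≤ t) :
    {x | t < halfPlanePoissonKernel z x} = ∅ :=
  eq_empty_of_forall_notMem fun x hx =>
    absurd hx (not_lt.mpr ((halfPlanePoissonKernel_le_inv hz x).trans ht))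

lemma measure_lt_halfPlanePoissonKernel_le (hz : z.im ≠ 0) {t : ℝ} (ht : 0 < t) :
    μ {x | t < halfPlanePoissonKernel z x} ≤
      dAlpha μ α * ENNReal.ofReal (2 ^ α * |z.im| ^ (α / 2) * t ^ (-(α / 2))) := by
  have hY : 0 < |z.im| := abs_pos.mpr hz
  calc μ {x | t < halfPlanePoissonKernel z x}
      ≤ μ (Ioo (z.re - √(|z.im| / t)) (z.re + √(|z.im| / t))) :=
        measure_mono (setOf_lt_halfPlanePoissonKernel_subset hz ht)
    _ ≤ dAlpha μ α * ENNReal.ofReal ((2 * √(|z.im| / t)) ^ α) :=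
        measure_Ioo_le_dAlpha_mul _ (Real.sqrt_pos.mpr (by positivity))
    _ = dAlpha μ α * ENNReal.ofReal (2 ^ α * |z.im| ^ (α / 2) * t ^ (-(α / 2))) := by
        rw [Real.mul_rpow zero_le_two (Real.sqrt_nonneg _), Real.sqrt_eq_rpow,
          ← Real.rpow_mul (by positivity), Real.div_rpow hY.le ht.le, Real.rpow_neg ht.le]
        ring_nf

lemma lintegral_Ioc_ofReal_rpow {p T : ℝ} (hp : -1 < p) (hT : 0 ≤ T) :
    ∫⁻ t in Ioc 0 T, ENNReal.ofReal (t ^ p) = ENNReal.ofReal (T ^ (p + 1) / (p + 1)) := by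
  have hint : IntegrableOn (fun t : ℝ => t ^ p) (Ioc 0 T) :=
    (intervalIntegrable_iff_integrableOn_Ioc_of_le hT).mp
      (intervalIntegral.intervalIntegrable_rpow' hp)
  have hnonneg : 0 ≤ᵐ[volume.restrict (Ioc 0 T)] fun t : ℝ => t ^ p := by
    filter_upwards [ae_restrict_mem measurableSet_Ioc] with t ht
    exact Real.rpow_nonneg ht.1.le p
  rw [← ofReal_integral_eq_lintegral_ofReal hint hnonneg, ← intervalIntegral.integral_of_le hT,
    integral_rpow (Or.inl hp), Real.zero_rpow (by linarith), sub_zero]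

lemma lintegral_halfPlanePoissonKernel_le (hα : α < 2) (hz : z.im ≠ 0) :
    ∫⁻ x, ENNReal.ofReal (halfPlanePoissonKernel z x) ∂μ ≤
      dAlpha μ α * ENNReal.ofReal (2 ^ α / (1 - α / 2) * |z.im| ^ (α - 1)) := by
  set Y := |z.im|
  have hY : 0 < Y := abs_pos.mpr hz
  set c := dAlpha μ α * ENNReal.ofReal (2 ^ α * Y ^ (α / 2))
  have distribution_le : ∀ t ∈ Ioi (0 : ℝ), μ {x | t < halfPlanePoissonKernel z x} ≤
      (Ioc 0 Y⁻¹).indicator (fun t => c * ENNReal.ofReal (t ^ (-(α / 2)))) t := by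
    intro t ht
    by_cases htY : t ≤ Y⁻¹
    · rw [indicator_of_mem (show t ∈ Ioc 0 Y⁻¹ from ⟨ht, htY⟩), mul_assoc,
        ← ENNReal.ofReal_mul (by positivity)]
      exact measure_lt_halfPlanePoissonKernel_le hz ht
    · rw [setOf_lt_halfPlanePoissonKernel_eq_empty hz (not_le.mp htY).le, measure_empty]
      exact zero_le
  have hrpow : Measurable fun t : ℝ => ENNReal.ofReal (t ^ (-(α / 2))) := by fun_prop
  calc ∫⁻ x, ENNReal.ofReal (halfPlanePoissonKernel z x) ∂μ
      = ∫⁻ t in Ioi 0, μ {x | t < halfPlanePoissonKernel z x} :=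
        lintegral_eq_lintegral_meas_lt μ
          (Filter.Eventually.of_forall (halfPlanePoissonKernel_nonneg z))
          (measurable_halfPlanePoissonKernel z).aemeasurable
    _ ≤ ∫⁻ t in Ioi 0, (Ioc 0 Y⁻¹).indicator (fun t => c * ENNReal.ofReal (t ^ (-(α / 2)))) t :=
        setLIntegral_mono ((hrpow.const_mul c).indicator measurableSet_Ioc) distribution_le
    _ ≤ ∫⁻ t in Ioc 0 Y⁻¹, c * ENNReal.ofReal (t ^ (-(α / 2))) := by
        rw [← lintegral_indicator measurableSet_Ioc]
        exact setLIntegral_le_lintegral _ _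
    _ = c * ENNReal.ofReal (Y⁻¹ ^ (1 - α / 2) / (1 - α / 2)) := by
        rw [lintegral_const_mul c hrpow, lintegral_Ioc_ofReal_rpow (by linarith) (by positivity),
          neg_add_eq_sub]
    _ = dAlpha μ α * ENNReal.ofReal (2 ^ α / (1 - α / 2) * Y ^ (α - 1)) := by
        have hexp : Y ^ (α - 1) = Y ^ (α / 2) * (Y ^ (1 - α / 2))⁻¹ := by
          rw [← Real.rpow_neg hY.le, ← Real.rpow_add hY]
          ring_nf
        rw [mul_assoc, ← ENNReal.ofReal_mul (by positivity), Real.inv_rpow hY.le, hexp]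
        ring_nf

lemma abs_im_rpow_mul_abs_im_borelTransform_le [IsFiniteMeasure μ] (hα : α < 2)
    (hd : dAlpha μ α ≠ ⊤) (hz : z.im ≠ 0) :
    |z.im| ^ (1 - α) * |(borelTransform μ z).im| ≤
      (dAlpha μ α).toReal * (2 ^ α / (1 - α / 2)) := by
  have hY : 0 < |z.im| := abs_pos.mpr hz
  have hF : |(borelTransform μ z).im| ≤
      (dAlpha μ α).toReal * (2 ^ α / (1 - α / 2) * |z.im| ^ (α - 1)) := by
    have h := (ofReal_abs_im_borelTransform μ hz).trans_le
      (lintegral_halfPlanePoissonKernel_le hα hz)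
    rw [← ENNReal.ofReal_toReal hd, ← ENNReal.ofReal_mul ENNReal.toReal_nonneg] at h
    have hα' : 0 < 1 - α / 2 := by linarith
    exact (ENNReal.ofReal_le_ofReal_iff (by positivity)).mp h
  calc |z.im| ^ (1 - α) * |(borelTransform μ z).im|
      ≤ |z.im| ^ (1 - α) *
          ((dAlpha μ α).toReal * (2 ^ α / (1 - α / 2) * |z.im| ^ (α - 1))) := by
        gcongr
    _ = (dAlpha μ α).toReal * (2 ^ α / (1 - α / 2)) *
          (|z.im| ^ (1 - α) * |z.im| ^ (α - 1)) := by
        ring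
    _ = (dAlpha μ α).toReal * (2 ^ α / (1 - α / 2)) := by
        rw [← Real.rpow_add hY, sub_add_sub_cancel', sub_self, Real.rpow_zero, mul_one]

end LayerCake

theorem stmt11_general (α : ℝ) (hα1 : α ≤ 1)
    (μ : Measure ℝ) [IsProbabilityMeasure μ] :
    (∃ C : ℝ, ∀ z : ℂ, z.im ≠ 0 →
        |z.im| ^ (1 - α) * |(borelTransform μ z).im| ≤ C) ↔
      dAlpha μ α ≠ ⊤ := by
  constructor
  · rintro ⟨C, hC⟩
    exact ne_top_of_le_ne_top ENNReal.ofReal_ne_top (dAlpha_le_of_abs_im_borelTransform_le hC)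
  · intro hd
    exact ⟨_, fun z hz => abs_im_rpow_mul_abs_im_borelTransform_le (by linarith) hd hz⟩

theorem stmt11 (α : ℝ) (hα0 : 0 < α) (hα1 : α ≤ 1)
    (μ : Measure ℝ) [IsProbabilityMeasure μ] :
    (∃ C : ℝ, ∀ z : ℂ, z.im ≠ 0 →
        |z.im| ^ (1 - α) * |(borelTransform μ z).im| ≤ C) ↔
      dAlpha μ α ≠ ⊤ :=
  stmt11_general α hα1 μ
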